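/- arXiv:0801.0209 — 2 statements merged into one kernel-verified Lean document; each statement's English description precedes it below -/
import Mathlib

section
/- Let X be a computable metric space with ideal points (s_i)_{i∈ℕ}, T:X→X a continuous map, and Y⊆X. Then the dimension-like topological entropy satisfies h_2(T,Y) = inf{s ≥ 0 : Y has a null s-cover}. -/
open MeasureTheory Filter Set Metric Topology
open scoped ENNReal NNReal

noncomputable section

/-- Decoding of rational numbers from natural number codes (a standard numbering of `ℚ`). -/
def ratOf (n : ℕ) : ℚ := (Encodable.decode (α := ℚ) n).getD 0

/-- Decoding of finite lists of naturals from natural number codes. -/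
def listOf (n : ℕ) : List ℕ := (Encodable.decode (α := List ℕ) n).getD []

/-- A set of codes is recursively enumerable (semi-decidable): the domain of a partial
recursive function. -/
def REset {α : Type*} [Primcodable α] (E : Set α) : Prop :=
  Partrec fun a => Part.assert (a ∈ E) fun _ => Part.some 0

/-- A computable metric space structure: a dense sequence of ideal points whose mutual
distances are computable, uniformly. -/
structure CMS (X : Type*) [MetricSpace X] where
  s : ℕ → X
  dense : DenseRange s
  distComp : ∃ g : ℕ → ℕ, Computable g ∧ ∀ i j k : ℕ,
    |(ratOf (g (Nat.pair (Nat.pair i j) k)) : ℝ) - dist (s i) (s j)| < (2:ℝ)^(-(k:ℤ))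

variable {X : Type*} [MetricSpace X]

/-- The ideal ball with code `c = ⟨i, j⟩`: the open ball centered at the ideal point `s i`
with rational radius coded by `j`. -/
def CMS.idealBall (M : CMS X) (c : ℕ) : Set X :=
  Metric.ball (M.s c.unpair.1) ((ratOf c.unpair.2 : ℝ))

/-- A recursively enumerable open set: a union of ideal balls indexed by an r.e. set. -/
def REopen (M : CMS X) (U : Set X) : Prop :=
  ∃ E : Set ℕ, REset E ∧ U = ⋃ c ∈ E, M.idealBall c

/-- A uniformly r.e. sequence of open sets. -/
def UREopen (M : CMS X) (U : ℕ → Set X) : Prop :=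
  ∃ E : Set ℕ, REset E ∧ ∀ n, U n = ⋃ c ∈ {c | Nat.pair n c ∈ E}, M.idealBall c

/-- A constructive `Gδ`-set: intersection of a uniformly r.e. sequence of open sets. -/
def ConstructiveGdelta (M : CMS X) (D : Set X) : Prop :=
  ∃ U : ℕ → Set X, UREopen M U ∧ D = ⋂ n, U n

variable [MeasurableSpace X]

/-- A computable (Borel probability) measure: the measures of finite unions of ideal balls
are uniformly lower semi-computable. -/
def ComputableMeasure (M : CMS X) (μ : Measure X) : Prop :=
  ∃ E : Set ℕ, REset E ∧ ∀ l q : ℕ,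
    (Nat.pair l q ∈ E ↔ (ratOf q : ℝ) < (μ (⋃ c ∈ listOf l, M.idealBall c)).toReal)

/-- A Martin-Löf test: a uniformly r.e. sequence of open sets with `μ (U n) < 2^{-n}`. -/
def MLTest (M : CMS X) (μ : Measure X) (U : ℕ → Set X) : Prop :=
  UREopen M U ∧ ∀ n, μ (U n) < ENNReal.ofReal ((2:ℝ)^(-(n:ℤ)))

/-- A Martin-Löf random point: a point not contained in any effective null set. -/
def MLRandom (M : CMS X) (μ : Measure X) (x : X) : Prop :=
  ∀ U : ℕ → Set X, MLTest M μ U → x ∉ ⋂ n, U n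

/-- `T` is computable on the set `D`: preimages of ideal balls are, on `D`, uniformly
r.e. open sets. -/
def ComputableOn (M : CMS X) (T : X → X) (D : Set X) : Prop :=
  ∃ U : ℕ → Set X, UREopen M U ∧ ∀ n, T ⁻¹' (M.idealBall n) ∩ D = U n ∩ D

/-- An (everywhere) computable map: preimages of ideal balls are uniformly r.e. open. -/
def ComputableMap (M : CMS X) (T : X → X) : Prop :=
  ∃ U : ℕ → Set X, UREopen M U ∧ ∀ n, T ⁻¹' (M.idealBall n) = U n

/-- An endomorphism of a computable probability space: a measure-preserving map computable
on a constructive `Gδ`-set of measure one. -/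
def IsEndo (M : CMS X) (μ : Measure X) (T : X → X) : Prop :=
  MeasurePreserving T μ μ ∧
    ∃ D : Set X, ConstructiveGdelta M D ∧ μ D = 1 ∧ ComputableOn M T D

/-- An almost decidable set. -/
def AlmostDecidable (M : CMS X) (μ : Measure X) (A : Set X) : Prop :=
  ∃ U V : Set X, REopen M U ∧ REopen M V ∧ U ⊆ A ∧ V ⊆ Aᶜ ∧ μ U + μ V = 1

/-- A prefix-free set of binary words. -/
def PrefixFree (D : Set (List Bool)) : Prop :=
  ∀ u ∈ D, ∀ v ∈ D, u <+: v → u = v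

/-- An interpreter: a partial recursive function on binary programs with prefix-free domain. -/
structure Interpreter where
  f : List Bool →. ℕ
  partrec : Partrec f
  prefixFree : PrefixFree {p | (f p).Dom}

/-- Prefix (self-delimiting) Kolmogorov complexity of `x` with respect to an interpreter. -/
def Interpreter.K (I : Interpreter) (x : ℕ) : ℕ :=
  sInf {m | ∃ p : List Bool, p.length = m ∧ x ∈ I.f p}

/-- A universal interpreter: additively optimal among all interpreters. -/
def Interpreter.Universal (U : Interpreter) : Prop :=
  ∀ I : Interpreter, ∃ c : ℕ, ∀ x : ℕ, (∃ p, x ∈ I.f p) → U.K x ≤ I.K x + c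

/-- A finite computable partition (with `k+1` atoms): pairwise disjoint r.e. open sets
whose union has measure one. -/
structure CPartition (M : CMS X) (μ : Measure X) (k : ℕ) where
  p : Fin (k+1) → Set X
  re : ∀ a, REopen M (p a)
  disj : ∀ a b, a ≠ b → Disjoint (p a) (p b)
  full : μ (⋃ a, p a) = 1

/-- A finite measurable partition (with `k+1` atoms). -/
structure MPartition {Y : Type*} [MeasurableSpace Y] (μ : Measure Y) (k : ℕ) where
  p : Fin (k+1) → Set Y
  meas : ∀ a, MeasurableSet (p a)
  disj : ∀ a b, a ≠ b → Disjoint (p a) (p b)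
  full : μ (⋃ a, p a) = 1

open Classical in
/-- The symbol at time `j` of the symbolic orbit of `x` w.r.t. the partition `p`. -/
def symb (T : X → X) {k : ℕ} (p : Fin (k+1) → Set X) (x : X) (j : ℕ) : Fin (k+1) :=
  if h : ∃ a, T^[j] x ∈ p a then h.choose else 0

/-- The code of the length-`n` symbolic word of `x`: the atom `ξ_n(x)` viewed as a word. -/
def wcode (T : X → X) {k : ℕ} (p : Fin (k+1) → Set X) (x : X) (n : ℕ) : ℕ :=
  Encodable.encode (List.ofFn fun j : Fin n => symb T p x (j : ℕ))

/-- The atom `ξ_n(x)` of the refined partition `ξ ∨ T⁻¹ξ ∨ … ∨ T^{-(n-1)}ξ` containing `x`. -/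
def refCell (T : X → X) {k : ℕ} (p : Fin (k+1) → Set X) (n : ℕ) (x : X) : Set X :=
  {y | ∀ j < n, ∀ a, T^[j] x ∈ p a → T^[j] y ∈ p a}

/-- `-(t * log₂ t)`, the summand of Shannon entropy (with the convention `0 log 0 = 0`). -/
def ent2 (t : ℝ) : ℝ := -(t * Real.logb 2 t)

/-- Shannon entropy `H_μ(ξ_n)` of the refined partition `ξ_n = ξ ∨ … ∨ T^{-(n-1)}ξ`. -/
def Hent (μ : Measure X) (T : X → X) {k : ℕ} (p : Fin (k+1) → Set X) (n : ℕ) : ℝ :=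
  ∑ w : Fin n → Fin (k+1), ent2 ((μ {y | ∀ j : Fin n, T^[(j:ℕ)] y ∈ p (w j)}).toReal)

/-- The entropy `h_μ(T,ξ) = lim_n H_μ(ξ_n)/n` of `T` relative to the partition `ξ`;
by subadditivity (Fekete's lemma) the limit equals the infimum. -/
def hPart (μ : Measure X) (T : X → X) {k : ℕ} (p : Fin (k+1) → Set X) : ℝ :=
  ⨅ n : ℕ, Hent μ T p (n+1) / (n+1)

/-- The Kolmogorov-Sinai entropy: supremum of `h_μ(T,ξ)` over finite measurable partitions. -/
def KSentropy (μ : Measure X) (T : X → X) : ℝ≥0∞ :=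
  ⨆ (k : ℕ) (ξ : MPartition μ k), ENNReal.ofReal (hPart μ T ξ.p)

/-- Symbolic orbit complexity relative to a partition: `limsup_n K(ξ_n(x))/n`. -/
def KsymPart (U : Interpreter) (T : X → X) {k : ℕ} (p : Fin (k+1) → Set X) (x : X) : ℝ≥0∞ :=
  Filter.limsup (fun n : ℕ => (U.K (wcode T p x n) : ℝ≥0∞) / (n : ℝ≥0∞)) atTop

/-- Symbolic orbit complexity: supremum over all finite computable partitions. -/
def Ksym (M : CMS X) (μ : Measure X) (U : Interpreter) (T : X → X) (x : X) : ℝ≥0∞ :=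
  ⨆ (k : ℕ) (ξ : CPartition M μ k), KsymPart U T ξ.p x

/-- `K_n(x,T,ε)`: the minimal complexity of a list of (codes of) ideal points which
`ε`-shadows the first `n` iterates of `x`. -/
def KnOrb (M : CMS X) (U : Interpreter) (T : X → X) (x : X) (ε : ℝ) (n : ℕ) : ℕ :=
  sInf {m | ∃ l : List ℕ, l.length = n ∧
    (∀ j < n, dist (M.s (l.getD j 0)) (T^[j] x) < ε) ∧ U.K (Encodable.encode l) = m}

/-- Upper orbit complexity `uK(x,T) = lim_{ε→0⁺} limsup_n K_n(x,T,ε)/n`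
(the limit is a supremum by monotonicity). -/
def uK (M : CMS X) (U : Interpreter) (T : X → X) (x : X) : ℝ≥0∞ :=
  ⨆ (ε : ℝ) (_ : 0 < ε),
    Filter.limsup (fun n : ℕ => (KnOrb M U T x ε n : ℝ≥0∞) / (n : ℝ≥0∞)) atTop

/-- Lower orbit complexity `lK(x,T) = lim_{ε→0⁺} liminf_n K_n(x,T,ε)/n`. -/
def lK (M : CMS X) (U : Interpreter) (T : X → X) (x : X) : ℝ≥0∞ :=
  ⨆ (ε : ℝ) (_ : 0 < ε),
    Filter.liminf (fun n : ℕ => (KnOrb M U T x ε n : ℝ≥0∞) / (n : ℝ≥0∞)) atTop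

/-- The Bowen ball `B_n(x,ε)`. -/
def BowenBall (T : X → X) (x : X) (n : ℕ) (ε : ℝ) : Set X :=
  {y | ∀ i < n, dist (T^[i] x) (T^[i] y) < ε}

/-- The `ε`-size of a set: `2^{-s}` where `s = sup{n : diam(TⁱE) ≤ ε for all i < n}`. -/
def esize (T : X → X) (ε : ℝ) (E : Set X) : ℝ≥0∞ :=
  ⨅ (n : ℕ) (_ : ∀ i < n, EMetric.diam (T^[i] '' E) ≤ ENNReal.ofReal ε), (2:ℝ≥0∞)^(-(n:ℤ))

/-- The outer quantity `m^s_δ(Y,ε)`: infimum over countable open covers of `Y` by sets of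
`ε`-size `< δ` of the sum of the `s`-powers of the `ε`-sizes. -/
def mSD (T : X → X) (Y : Set X) (s ε δ : ℝ) : ℝ≥0∞ :=
  ⨅ (G : ℕ → Set X) (_ : (∀ n, IsOpen (G n)) ∧ (∀ n, esize T ε (G n) < ENNReal.ofReal δ) ∧
      Y ⊆ ⋃ n, G n),
    ∑' n : ℕ, (esize T ε (G n)) ^ s

/-- `m^s(Y,ε) = lim_{δ→0⁺} m^s_δ(Y,ε)` (an increasing limit, hence a supremum). -/
def mS (T : X → X) (Y : Set X) (s ε : ℝ) : ℝ≥0∞ :=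
  ⨆ (δ : ℝ) (_ : 0 < δ), mSD T Y s ε δ

/-- The dimension-like topological entropy `h₂(T,Y)`: the limit as `ε → 0⁺` (a supremum)
of the critical exponents `h₂(T,Y,ε) = inf{s ≥ 0 : m^s(Y,ε) = 0}`. -/
def h2 (T : X → X) (Y : Set X) : ℝ≥0∞ :=
  ⨆ (ε : ℝ) (_ : 0 < ε), sInf {c : ℝ≥0∞ | ∃ s : ℝ≥0, c = (s : ℝ≥0∞) ∧ mS T Y (s:ℝ) ε = 0}

/-- `E ⊆ ℕ³` is a null `s`-cover of `Y`: `∑_{(i,n,p)∈E} 2^{-sn} < ∞` and for all `k,p` the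
Bowen balls `B_n(s_i, 2^{-p})` with `(i,n,p) ∈ E`, `n ≥ k` cover `Y`. -/
def NullSCover (M : CMS X) (T : X → X) (Y : Set X) (s : ℝ) (E : Set (ℕ × ℕ × ℕ)) : Prop :=
  (∑' e : E, (2:ℝ≥0∞) ^ (-(s * ((e : ℕ × ℕ × ℕ).2.1 : ℝ)))) ≠ ⊤ ∧
  ∀ k p : ℕ, Y ⊆ ⋃ e ∈ {e : ℕ × ℕ × ℕ | e ∈ E ∧ k ≤ e.2.1 ∧ e.2.2 = p},
    BowenBall T (M.s e.1) e.2.1 ((2:ℝ)^(-(p:ℤ)))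

/-- The effective topological entropy: the infimum of the `s ≥ 0` such that `Y` admits a
recursively enumerable null `s`-cover. -/
def h2eff (M : CMS X) (T : X → X) (Y : Set X) : ℝ≥0∞ :=
  sInf {c : ℝ≥0∞ | ∃ s : ℝ≥0, c = (s : ℝ≥0∞) ∧ ∃ E : Set (ℕ × ℕ × ℕ),
    REset E ∧ NullSCover M T Y (s:ℝ) E}

/-- `N(X,n,ε)`: minimal cardinality of a cover of `X` by Bowen balls `B_n(x,ε)`. -/
def Ncover (T : X → X) (n : ℕ) (ε : ℝ) : ℕ :=
  sInf {m | ∃ F : Finset X, F.card = m ∧ ∀ y : X, ∃ x ∈ F, y ∈ BowenBall T x n ε}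

/-- Bowen's topological entropy `h₁(T,X) = lim_{ε→0⁺} limsup_n (log₂ N(X,n,ε))/n`. -/
def h1 (T : X → X) : ℝ≥0∞ :=
  ⨆ (ε : ℝ) (_ : 0 < ε),
    Filter.limsup (fun n : ℕ => ENNReal.ofReal (Real.logb 2 (Ncover T n ε)) / (n : ℝ≥0∞)) atTop

/-- Cylinder of a finite word in the symbolic space `(Fin (k+1))^ℕ`. -/
def Cyl {k : ℕ} (w : List (Fin (k+1))) : Set (ℕ → Fin (k+1)) :=
  {ω | ∀ j < w.length, ω j = w.getD j 0}

/-- Decoding of finite words over the alphabet `{0,…,k}` from natural number codes. -/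
def wordOf (k m : ℕ) : List (Fin (k+1)) := (Encodable.decode (α := List (Fin (k+1))) m).getD []

end

/-!
If `E` is a null `s`-cover and `2 · 2^{-p} ≤ ε`, the Bowen balls `B_n(s_i, 2^{-p})` of `E` with
`n ≥ k` cover `Y` by open sets of `ε`-size at most `2^{-n}`; for `s' > s` their `s'`-weight is at
most `2^{-(s'-s)k}` times the (finite) weight of `E`, so `m^{s'}(Y,ε) = 0` and `h₂(T,Y) ≤ s`.

Conversely, if `s > h₂(T,Y)` then `m^s(Y,ε) = 0` for every `ε`. For `ε = 2^{-p}/2` choose a cover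
`(G_{p,j,n})_n` of `Y` by sets of `ε`-size below `2^{-j}` and `s`-weight below `2^{-s(p+j)}`. If the
iterates `Tⁱ G` have diameter `≤ ε` for `i < m`, then `G` lies in a Bowen ball `B_m(s_i, 2^{-p})`
around an ideal point close to a point of `G`. Taking `m` maximal up to `p + j + n` makes
`2^{-sm} ≤ (ε-size G)^s + 2^{-s(p+j+n)}`, and these Bowen balls form a null `s`-cover.
-/

theorem two_zpow_neg_natCast (n : ℕ) : (2 : ℝ≥0∞) ^ (-(n : ℤ)) = 2⁻¹ ^ n := by
  rw [ENNReal.zpow_neg, zpow_natCast, ENNReal.inv_pow]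

theorem two_zpow_neg_natCast_rpow (n : ℕ) (s : ℝ) :
    ((2 : ℝ≥0∞) ^ (-(n : ℤ))) ^ s = 2 ^ (-(s * n)) := by
  rw [← ENNReal.rpow_intCast, ← ENNReal.rpow_mul]
  push_cast
  ring_nf

theorem two_rpow_neg_mul_natCast (s : ℝ) (n : ℕ) :
    (2 : ℝ≥0∞) ^ (-(s * n)) = (2 ^ (-s)) ^ n := by
  rw [← ENNReal.rpow_natCast, ← ENNReal.rpow_mul]
  ring_nf

theorem tendsto_two_zpow_neg_natCast :
    Tendsto (fun n : ℕ => (2 : ℝ≥0∞) ^ (-(n : ℤ))) atTop (𝓝 0) := by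
  simp only [two_zpow_neg_natCast]
  exact ENNReal.tendsto_pow_atTop_nhds_zero_of_lt_one (ENNReal.inv_lt_one.2 ENNReal.one_lt_two)

theorem tsum_range_le_tsum_comp {α β : Type*} (F : β → α) (f : α → ℝ≥0∞) :
    ∑' a : range F, f a ≤ ∑' b, f (F b) :=
  calc ∑' a : range F, f a = ∑' a : range F, f (F (rangeSplitting F a)) := by
        simp only [apply_rangeSplitting]
    _ ≤ ∑' b, f (F b) :=
        ENNReal.tsum_comp_le_tsum_of_injective (rangeSplitting_injective F) (f ∘ F)

theorem tsum_add_geometric_prod_ne_top {r : ℝ≥0∞} (hr : r < 1) (a : ℕ × ℕ × ℕ → ℝ≥0∞)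
    (ha : ∀ p j, ∑' n, a (p, j, n) ≤ r ^ (p + j)) :
    ∑' q : ℕ × ℕ × ℕ, (a q + r ^ (q.1 + q.2.1 + q.2.2)) ≠ ⊤ := by
  set C := ∑' n : ℕ, r ^ n
  have hC : C ≠ ⊤ :=
    (ENNReal.tsum_geometric r).trans_ne (ENNReal.inv_ne_top.2 (tsub_pos_of_lt hr).ne')
  have hinner : ∀ p j, ∑' n, (a (p, j, n) + r ^ (p + j + n)) ≤ r ^ p * (r ^ j * (1 + C)) := by
    intro p j
    rw [ENNReal.tsum_add]
    simp only [pow_add r (p + j)]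
    rw [ENNReal.tsum_mul_left, ← mul_assoc, ← pow_add, mul_add, mul_one]
    exact add_le_add (ha p j) le_rfl
  refine ne_top_of_le_ne_top (b := C * (C * (1 + C))) ?_ ?_
  · exact ENNReal.mul_ne_top hC
      (ENNReal.mul_ne_top hC (ENNReal.add_ne_top.2 ⟨ENNReal.one_ne_top, hC⟩))
  calc ∑' q : ℕ × ℕ × ℕ, (a q + r ^ (q.1 + q.2.1 + q.2.2))
      = ∑' (p) (j) (n), (a (p, j, n) + r ^ (p + j + n)) := by
        rw [ENNReal.tsum_prod']
        exact tsum_congr fun p => ENNReal.tsum_prod'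
    _ ≤ ∑' (p) (j), r ^ p * (r ^ j * (1 + C)) :=
        ENNReal.tsum_le_tsum fun p => ENNReal.tsum_le_tsum fun j => hinner p j
    _ = C * (C * (1 + C)) := by
        simp only [ENNReal.tsum_mul_left, ENNReal.tsum_mul_right, C]

section BowenBall

variable {X : Type*} [MetricSpace X] {T : X → X}

theorem isOpen_bowenBall (hT : Continuous T) (x : X) (n : ℕ) (r : ℝ) :
    IsOpen (BowenBall T x n r) := by
  have : BowenBall T x n r = ⋂ i ∈ Finset.range n, T^[i] ⁻¹' ball (T^[i] x) r := by
    ext y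
    simp [BowenBall, dist_comm]
  rw [this]
  exact isOpen_biInter_finset fun i _ => isOpen_ball.preimage (hT.iterate i)

theorem mem_bowenBall_self (x : X) (n : ℕ) {r : ℝ} (hr : 0 < r) : x ∈ BowenBall T x n r :=
  fun i _ => by simpa using hr

theorem esize_le_two_zpow {ε : ℝ} {E : Set X} {n : ℕ}
    (h : ∀ i < n, ediam (T^[i] '' E) ≤ ENNReal.ofReal ε) :
    esize T ε E ≤ 2 ^ (-(n : ℤ)) :=
  iInf₂_le n h

theorem esize_le_one (ε : ℝ) (E : Set X) : esize T ε E ≤ 1 := by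
  simpa using esize_le_two_zpow (T := T) (ε := ε) (E := E) (n := 0) (by simp)

theorem esize_empty (ε : ℝ) : esize T ε ∅ = 0 :=
  le_antisymm (ge_of_tendsto' tendsto_two_zpow_neg_natCast fun _ =>
    esize_le_two_zpow fun _ _ => by simp) bot_le

theorem esize_bowenBall_le {x : X} {n : ℕ} {r ε : ℝ} (h : 2 * r ≤ ε) :
    esize T ε (BowenBall T x n r) ≤ 2 ^ (-(n : ℤ)) := by
  refine esize_le_two_zpow fun i hi => ediam_le ?_
  rintro _ ⟨a, ha, rfl⟩ _ ⟨b, hb, rfl⟩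
  rw [edist_dist]
  refine ENNReal.ofReal_le_ofReal ?_
  linarith [dist_triangle_left (T^[i] a) (T^[i] b) (T^[i] x), ha i hi, hb i hi]

theorem exists_subset_bowenBall {x : ℕ → X} (hx : DenseRange x) (hT : Continuous T) {ε : ℝ}
    (hε : 0 < ε) {E : Set X} {m : ℕ}
    (hE : ∀ i < m, ediam (T^[i] '' E) ≤ ENNReal.ofReal ε) :
    ∃ k, E ⊆ BowenBall T (x k) m (2 * ε) := by
  rcases E.eq_empty_or_nonempty with rfl | ⟨y, hy⟩
  · exact ⟨0, empty_subset _⟩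
  obtain ⟨k, hk⟩ :=
    hx.exists_mem_open (isOpen_bowenBall hT y m ε) ⟨y, mem_bowenBall_self y m hε⟩
  refine ⟨k, fun z hz i hi => ?_⟩
  have hyz : dist (T^[i] y) (T^[i] z) ≤ ε := by
    rw [← ENNReal.ofReal_le_ofReal_iff hε.le, ← edist_dist]
    exact (edist_le_ediam_of_mem (mem_image_of_mem _ hy) (mem_image_of_mem _ hz)).trans
      (hE i hi)
  linarith [dist_triangle (T^[i] (x k)) (T^[i] y) (T^[i] z), hk i hi,
    dist_comm (T^[i] y) (T^[i] (x k))]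

end BowenBall

section DimensionEntropy

variable {X : Type*} [MetricSpace X] {T : X → X} {Y : Set X}

theorem mSD_antitone (Y : Set X) (ε δ : ℝ) : Antitone fun s => mSD T Y s ε δ :=
  fun _ _ h => iInf₂_mono fun G _ => ENNReal.tsum_le_tsum fun n =>
    ENNReal.rpow_le_rpow_of_exponent_ge (esize_le_one ε (G n)) h

theorem mS_antitone (Y : Set X) (ε : ℝ) : Antitone fun s => mS T Y s ε :=
  fun _ _ h => iSup₂_mono fun δ _ => mSD_antitone Y ε δ h

theorem mSD_le_tsum {ι : Type*} [Countable ι] {s ε δ : ℝ} (hs : 0 < s) (hδ : 0 < δ)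
    (U : ι → Set X) (hU : ∀ i, IsOpen (U i)) (hUδ : ∀ i, esize T ε (U i) < ENNReal.ofReal δ)
    (hYU : Y ⊆ ⋃ i, U i) :
    mSD T Y s ε δ ≤ ∑' i, esize T ε (U i) ^ s := by
  obtain ⟨f, hf⟩ := exists_injective_nat ι
  set G : ℕ → Set X := Function.extend f U fun _ => ∅
  have hGf : ∀ i, G (f i) = U i := hf.extend_apply U _
  have hG : ∀ n ∉ range f, G n = ∅ := fun n hn => Function.extend_apply' _ _ n hn
  have hGcover : (∀ n, IsOpen (G n)) ∧ (∀ n, esize T ε (G n) < ENNReal.ofReal δ) ∧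
      Y ⊆ ⋃ n, G n := by
    refine ⟨fun n => ?_, fun n => ?_,
      hYU.trans (iUnion_subset fun i => hGf i ▸ subset_iUnion G (f i))⟩
    · by_cases hn : n ∈ range f
      · obtain ⟨i, rfl⟩ := hn
        exact hGf i ▸ hU i
      · exact hG n hn ▸ isOpen_empty
    · by_cases hn : n ∈ range f
      · obtain ⟨i, rfl⟩ := hn
        exact hGf i ▸ hUδ i
      · rw [hG n hn, esize_empty]
        exact ENNReal.ofReal_pos.2 hδ
  have hsupp : Function.support (fun n => esize T ε (G n) ^ s) ⊆ range f := by
    intro n hn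
    by_contra h
    exact hn (by simp only [hG n h, esize_empty, ENNReal.zero_rpow_of_pos hs])
  calc mSD T Y s ε δ ≤ ∑' n, esize T ε (G n) ^ s := iInf₂_le G hGcover
    _ = ∑' i, esize T ε (U i) ^ s := by
      rw [← hf.tsum_eq hsupp]
      simp only [hGf]

theorem mSD_le_of_nullSCover (M : CMS X) (hT : Continuous T) {s s' ε δ : ℝ}
    {E : Set (ℕ × ℕ × ℕ)} (hE : NullSCover M T Y s E) (hs' : 0 < s') (hss' : s ≤ s') {p k : ℕ}
    (hp : 2 * (2 : ℝ) ^ (-(p : ℤ)) ≤ ε) (hk : 2 ^ (-(k : ℤ)) < ENNReal.ofReal δ) :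
    mSD T Y s' ε δ ≤ (2 ^ (-(s' - s))) ^ k * ∑' e : E, 2 ^ (-(s * (e : ℕ × ℕ × ℕ).2.1)) := by
  set Ek := {e : ℕ × ℕ × ℕ | e ∈ E ∧ k ≤ e.2.1 ∧ e.2.2 = p}
  set B : ℕ × ℕ × ℕ → Set X := fun e => BowenBall T (M.s e.1) e.2.1 (2 ^ (-(p : ℤ)))
  have hsize : ∀ e, esize T ε (B e) ≤ 2 ^ (-(e.2.1 : ℤ)) := fun _ => esize_bowenBall_le hp
  have hkn : ∀ e : Ek, k ≤ (e : ℕ × ℕ × ℕ).2.1 := fun e => e.2.2.1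
  have ha : (2 : ℝ≥0∞) ^ (-(s' - s)) ≤ 1 :=
    (ENNReal.rpow_le_rpow_of_exponent_le one_le_two (by linarith)).trans_eq ENNReal.rpow_zero
  calc mSD T Y s' ε δ ≤ ∑' e : Ek, esize T ε (B e) ^ s' := by
        refine mSD_le_tsum hs' (ENNReal.ofReal_pos.1 (pos_of_gt hk)) (fun e : Ek => B e)
          (fun _ => isOpen_bowenBall hT _ _ _)
          (fun e => ((hsize e).trans (ENNReal.zpow_le_of_le one_le_two ?_)).trans_lt hk) ?_
        · exact neg_le_neg (by exact_mod_cast hkn e)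
        · intro y hy
          obtain ⟨e, he, hye⟩ := mem_iUnion₂.1 (hE.2 k p hy)
          exact mem_iUnion.2 ⟨⟨e, he⟩, hye⟩
    _ ≤ ∑' e : Ek, (2 ^ (-(s' - s))) ^ k * 2 ^ (-(s * (e : ℕ × ℕ × ℕ).2.1)) := by
        refine ENNReal.tsum_le_tsum fun e => ?_
        calc esize T ε (B e) ^ s' ≤ ((2 : ℝ≥0∞) ^ (-((e : ℕ × ℕ × ℕ).2.1 : ℤ))) ^ s' :=
              ENNReal.rpow_le_rpow (hsize e) hs'.le
          _ = (2 ^ (-(s' - s))) ^ (e : ℕ × ℕ × ℕ).2.1 * 2 ^ (-(s * (e : ℕ × ℕ × ℕ).2.1)) := by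
              rw [two_zpow_neg_natCast_rpow, ← two_rpow_neg_mul_natCast,
                ← ENNReal.rpow_add _ _ two_ne_zero ENNReal.ofNat_ne_top]
              ring_nf
          _ ≤ _ := by
              gcongr ?_ * _
              exact pow_le_pow_right_of_le_one' ha (hkn e)
    _ ≤ (2 ^ (-(s' - s))) ^ k * ∑' e : E, 2 ^ (-(s * (e : ℕ × ℕ × ℕ).2.1)) := by
        rw [ENNReal.tsum_mul_left]
        gcongr
        exact ENNReal.tsum_mono_subtype (fun e : ℕ × ℕ × ℕ => (2 : ℝ≥0∞) ^ (-(s * e.2.1)))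
          fun _ he => he.1

theorem mS_eq_zero_of_nullSCover (M : CMS X) (hT : Continuous T) {s s' ε : ℝ}
    {E : Set (ℕ × ℕ × ℕ)} (hE : NullSCover M T Y s E) (hs : 0 ≤ s) (hss' : s < s')
    (hε : 0 < ε) : mS T Y s' ε = 0 := by
  obtain ⟨p, hp⟩ : ∃ p : ℕ, 2 * (2 : ℝ) ^ (-(p : ℤ)) ≤ ε := by
    obtain ⟨p, hp⟩ := exists_pow_lt_of_lt_one (half_pos hε) one_half_lt_one
    exact ⟨p, by rw [zpow_neg, zpow_natCast, ← inv_pow, ← one_div]; linarith⟩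
  have ha : (2 : ℝ≥0∞) ^ (-(s' - s)) < 1 :=
    ENNReal.rpow_lt_one_of_one_lt_of_neg ENNReal.one_lt_two (by linarith)
  simp only [mS, ENNReal.iSup_eq_zero]
  intro δ hδ
  have hlevel := (tendsto_two_zpow_neg_natCast.eventually_lt_const (ENNReal.ofReal_pos.2 hδ)).mono
    fun k hk => mSD_le_of_nullSCover M hT hE (hs.trans_lt hss') hss'.le hp hk
  refine le_antisymm (ge_of_tendsto ?_ hlevel) bot_le
  simpa using ENNReal.Tendsto.mul_const (ENNReal.tendsto_pow_atTop_nhds_zero_of_lt_one ha)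
    (Or.inr hE.1)

end DimensionEntropy

section NullCoverConstruction

variable {X : Type*} [MetricSpace X] {T : X → X} {Y : Set X}

theorem exists_cover_of_mS_eq_zero {s ε δ : ℝ} (h : mS T Y s ε = 0) (hδ : 0 < δ) {η : ℝ≥0∞}
    (hη : 0 < η) :
    ∃ G : ℕ → Set X, (∀ n, esize T ε (G n) < ENNReal.ofReal δ) ∧ Y ⊆ ⋃ n, G n ∧
      ∑' n, esize T ε (G n) ^ s < η := by
  have hmSD : mSD T Y s ε δ < η :=
    ((le_iSup₂ (f := fun δ (_ : 0 < δ) => mSD T Y s ε δ) δ hδ).trans_eq h).trans_lt hη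
  obtain ⟨G, hG⟩ := iInf_lt_iff.1 hmSD
  obtain ⟨⟨-, hGδ, hYG⟩, hsum⟩ := iInf_lt_iff.1 hG
  exact ⟨G, hGδ, hYG, hsum⟩

theorem exists_ediam_le_of_esize_lt {ε : ℝ} {E : Set X} {j N : ℕ}
    (hj : esize T ε E < 2 ^ (-(j : ℤ))) (hjN : j ≤ N) :
    ∃ m, j ≤ m ∧ (∀ i < m, ediam (T^[i] '' E) ≤ ENNReal.ofReal ε) ∧
      (2 ^ (-(m : ℤ)) ≤ esize T ε E ∨ m = N) := by
  classical
  set P : ℕ → Prop := fun m => ∀ i < m, ediam (T^[i] '' E) ≤ ENNReal.ofReal ε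
  have hP : ∀ {m m'}, P m → m' ≤ m → P m' := fun h hle i hi => h i (hi.trans_le hle)
  have hPj : P j := by
    obtain ⟨m, hm⟩ := iInf_lt_iff.1 hj
    obtain ⟨hPm, hlt⟩ := iInf_lt_iff.1 hm
    refine hP hPm (le_of_not_ge fun hmj => hlt.not_ge ?_)
    exact ENNReal.zpow_le_of_le one_le_two (neg_le_neg (by exact_mod_cast hmj))
  set m := Nat.findGreatest P N
  refine ⟨m, Nat.le_findGreatest hjN hPj, Nat.findGreatest_spec hjN hPj, ?_⟩
  rcases (Nat.findGreatest_le (P := P) N).lt_or_eq with hlt | heq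
  · refine .inl (le_iInf₂ fun m' hm' => ENNReal.zpow_le_of_le one_le_two (neg_le_neg ?_))
    by_contra! h
    exact Nat.findGreatest_is_greatest (Nat.lt_succ_self m) hlt (hP hm' (by omega))
  · exact .inr heq

theorem exists_subset_bowenBall_of_esize_lt {x : ℕ → X} (hx : DenseRange x) (hT : Continuous T)
    {ε s : ℝ} (hε : 0 < ε) (hs : 0 ≤ s) {E : Set X} {j N : ℕ}
    (hj : esize T ε E < 2 ^ (-(j : ℤ))) (hjN : j ≤ N) :
    ∃ k m, j ≤ m ∧ E ⊆ BowenBall T (x k) m (2 * ε) ∧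
      (2 ^ (-s) : ℝ≥0∞) ^ m ≤ esize T ε E ^ s + (2 ^ (-s)) ^ N := by
  obtain ⟨m, hjm, hdiam, hm⟩ := exists_ediam_le_of_esize_lt hj hjN
  obtain ⟨k, hk⟩ := exists_subset_bowenBall hx hT hε hdiam
  refine ⟨k, m, hjm, hk, ?_⟩
  rcases hm with hm | rfl
  · rw [← two_rpow_neg_mul_natCast, ← two_zpow_neg_natCast_rpow]
    exact le_add_right (ENNReal.rpow_le_rpow hm hs)
  · exact le_add_self

theorem exists_nullSCover_of_mS_eq_zero (M : CMS X) (hT : Continuous T) {s : ℝ} (hs : 0 < s)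
    (h : ∀ ε > 0, mS T Y s ε = 0) : ∃ E, NullSCover M T Y s E := by
  set r : ℝ≥0∞ := 2 ^ (-s)
  have hr : r < 1 := ENNReal.rpow_lt_one_of_one_lt_of_neg ENNReal.one_lt_two (by linarith)
  have hcover : ∀ p j : ℕ, ∃ G : ℕ → Set X,
      (∀ n, esize T (2 ^ (-(p : ℤ)) / 2) (G n) < 2 ^ (-(j : ℤ))) ∧ Y ⊆ ⋃ n, G n ∧
        ∑' n, esize T (2 ^ (-(p : ℤ)) / 2) (G n) ^ s < r ^ (p + j) := by
    intro p j
    obtain ⟨G, hGδ, hYG, hsum⟩ :=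
      exists_cover_of_mS_eq_zero (h (2 ^ (-(p : ℤ)) / 2) (by positivity))
      (zpow_pos two_pos (-(j : ℤ))) (η := r ^ (p + j))
      (ENNReal.pow_pos (ENNReal.rpow_pos (by norm_num) ENNReal.ofNat_ne_top) _)
    refine ⟨G, fun n => (hGδ n).trans_eq ?_, hYG, hsum⟩
    rw [two_zpow_neg_natCast, zpow_neg, zpow_natCast, ← inv_pow, ENNReal.ofReal_pow (by norm_num),
      ENNReal.ofReal_inv_of_pos two_pos, ENNReal.ofReal_ofNat]
  choose G hGδ hYG hsum using hcover
  have hball : ∀ q : ℕ × ℕ × ℕ, ∃ k m, q.2.1 ≤ m ∧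
      G q.1 q.2.1 q.2.2 ⊆ BowenBall T (M.s k) m (2 ^ (-(q.1 : ℤ))) ∧
      r ^ m ≤ esize T (2 ^ (-(q.1 : ℤ)) / 2) (G q.1 q.2.1 q.2.2) ^ s +
        r ^ (q.1 + q.2.1 + q.2.2) := by
    rintro ⟨p, j, n⟩
    have := exists_subset_bowenBall_of_esize_lt M.dense hT (by positivity) hs.le (hGδ p j n)
      (show j ≤ p + j + n by omega)
    simpa only [mul_div_cancel₀ _ (two_ne_zero' ℝ)] using this
  choose k m hjm hGB hm using hball
  refine ⟨range fun q => (k q, m q, q.1), ?_, fun K p y hy => ?_⟩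
  · simp only [two_rpow_neg_mul_natCast]
    refine ne_top_of_le_ne_top (tsum_add_geometric_prod_ne_top hr
      (fun q => esize T (2 ^ (-(q.1 : ℤ)) / 2) (G q.1 q.2.1 q.2.2) ^ s)
      fun p j => (hsum p j).le) ?_
    exact (tsum_range_le_tsum_comp _ fun e : ℕ × ℕ × ℕ => r ^ e.2.1).trans
      (ENNReal.tsum_le_tsum hm)
  · obtain ⟨n, hn⟩ := mem_iUnion.1 (hYG p K hy)
    exact mem_iUnion₂.2 ⟨_, ⟨mem_range_self (p, K, n), hjm (p, K, n), rfl⟩, hGB (p, K, n) hn⟩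

end NullCoverConstruction

theorem h2_le_of_nullSCover {X : Type*} [MetricSpace X] (M : CMS X) {T : X → X}
    (hT : Continuous T) {Y : Set X} {s : ℝ≥0} {E : Set (ℕ × ℕ × ℕ)}
    (hE : NullSCover M T Y s E) : h2 T Y ≤ s :=
  ENNReal.le_of_forall_pos_le_add fun η hη _ => iSup₂_le fun ε hε =>
    sInf_le ⟨s + η, by push_cast; rfl,
      mS_eq_zero_of_nullSCover M hT hE s.2 (by simpa using hη) hε⟩

theorem mS_eq_zero_of_h2_lt {X : Type*} [MetricSpace X] {T : X → X} {Y : Set X} {s : ℝ≥0}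
    (hs : h2 T Y < s) {ε : ℝ} (hε : 0 < ε) : mS T Y s ε = 0 := by
  have : sInf {c : ℝ≥0∞ | ∃ u : ℝ≥0, c = u ∧ mS T Y u ε = 0} < s :=
    (le_iSup₂ (f := fun ε (_ : 0 < ε) =>
      sInf {c : ℝ≥0∞ | ∃ u : ℝ≥0, c = u ∧ mS T Y u ε = 0}) ε hε).trans_lt hs
  obtain ⟨_, ⟨u, rfl, hu⟩, hus⟩ := sInf_lt_iff.1 this
  exact le_antisymm (hu ▸ mS_antitone Y ε (by exact_mod_cast hus.le)) bot_le

theorem stmt_13_general {X : Type*} [MetricSpace X]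
    (M : CMS X) (T : X → X) (hT : Continuous T) (Y : Set X) :
    h2 T Y = sInf {c : ℝ≥0∞ | ∃ s : ℝ≥0, c = (s : ℝ≥0∞) ∧
      ∃ E : Set (ℕ × ℕ × ℕ), NullSCover M T Y (s:ℝ) E} := by
  refine le_antisymm (le_sInf ?_) (le_of_forall_gt_imp_ge_of_dense fun t ht => ?_)
  · rintro _ ⟨s, rfl, E, hE⟩
    exact h2_le_of_nullSCover M hT hE
  · obtain ⟨s, hs, hst⟩ := ENNReal.lt_iff_exists_nnreal_btwn.1 ht
    have hs0 : (0 : ℝ) < s := by exact_mod_cast pos_of_gt hs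
    obtain ⟨E, hE⟩ :=
      exists_nullSCover_of_mS_eq_zero M hT hs0 fun ε hε => mS_eq_zero_of_h2_lt hs hε
    exact le_trans (sInf_le ⟨s, rfl, E, hE⟩) hst.le

/-- Characterization of the dimension-like topological entropy via null
`s`-covers: `h₂(T,Y) = inf{s ≥ 0 : Y has a null s-cover}`. -/
theorem stmt_13 {X : Type*} [MetricSpace X] [CompleteSpace X]
    (M : CMS X) (T : X → X) (hT : Continuous T) (Y : Set X) :
    h2 T Y = sInf {c : ℝ≥0∞ | ∃ s : ℝ≥0, c = (s : ℝ≥0∞) ∧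
      ∃ E : Set (ℕ × ℕ × ℕ), NullSCover M T Y (s:ℝ) E} :=
  stmt_13_general M T hT Y
end

section
/- Let (X,d) be a separable metric space, μ and (μ_n)_{n∈ℕ} Borel probability measures on X, and A a countable basis of the topology of X which is closed under finite unions. If μ_n(A) → μ(A) as n→∞ for every A∈A, then μ_n converges weakly to μ, i.e. ∫ f dμ_n → ∫ f dμ for every bounded continuous real-valued function f on X. -/
open MeasureTheory Filter Set Metric Topology
open scoped ENNReal NNReal

/-!
Every open set `G` is the union of the members of `𝒜` it contains. As `𝒜` is countable and closed
under finite unions, this union is directed, so continuity from below gives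
`μ G = ⨆ {μ A | A ∈ 𝒜, A ⊆ G}`. Each such `μ A` is the limit of `μₙ A ≤ μₙ G`, hence
`μ G ≤ liminf μₙ G` for every open `G`, which is the open-set condition of the portmanteau theorem.
-/

namespace TopologicalSpace.IsTopologicalBasis

variable {X : Type*} [TopologicalSpace X] [MeasurableSpace X] {𝒜 : Set (Set X)}

theorem measure_isOpen_eq_iSup (μ : Measure X) (hcount : 𝒜.Countable)
    (hbasis : IsTopologicalBasis 𝒜) (hunion : ∀ A ∈ 𝒜, ∀ B ∈ 𝒜, A ∪ B ∈ 𝒜)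
    {G : Set X} (hG : IsOpen G) :
    μ G = ⨆ A : {A // A ∈ 𝒜 ∧ A ⊆ G}, μ A := by
  have : Countable {A // A ∈ 𝒜 ∧ A ⊆ G} := (hcount.mono fun _ hA ↦ hA.1).to_subtype
  have hdir : Directed (· ⊆ ·) fun A : {A // A ∈ 𝒜 ∧ A ⊆ G} ↦ (A : Set X) := fun A B ↦
    ⟨⟨A ∪ B, hunion _ A.2.1 _ B.2.1, union_subset A.2.2 B.2.2⟩,
      subset_union_left, subset_union_right⟩
  rw [← hdir.measure_iUnion]
  exact congrArg μ ((hbasis.open_eq_sUnion' hG).trans sUnion_eq_iUnion)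

theorem measure_isOpen_le_liminf {ι : Type*} {L : Filter ι} [L.NeBot]
    {μ : Measure X} {μs : ι → Measure X} (hcount : 𝒜.Countable)
    (hbasis : IsTopologicalBasis 𝒜) (hunion : ∀ A ∈ 𝒜, ∀ B ∈ 𝒜, A ∪ B ∈ 𝒜)
    (hconv : ∀ A ∈ 𝒜, Tendsto (fun i ↦ μs i A) L (𝓝 (μ A))) {G : Set X} (hG : IsOpen G) :
    μ G ≤ L.liminf fun i ↦ μs i G := by
  rw [hbasis.measure_isOpen_eq_iSup μ hcount hunion hG]
  refine iSup_le fun A ↦ ?_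
  rw [← (hconv A A.2.1).liminf_eq]
  exact liminf_le_liminf (.of_forall fun i ↦ measure_mono A.2.2)

end TopologicalSpace.IsTopologicalBasis

theorem stmt_19_general {X : Type*} [MetricSpace X]
    [MeasurableSpace X] [BorelSpace X]
    (μ : MeasureTheory.Measure X) (μs : ℕ → MeasureTheory.Measure X)
    [MeasureTheory.IsProbabilityMeasure μ]
    [∀ n, MeasureTheory.IsProbabilityMeasure (μs n)]
    (𝒜 : Set (Set X)) (hcount : 𝒜.Countable)
    (hbasis : TopologicalSpace.IsTopologicalBasis 𝒜)
    (hunion : ∀ A ∈ 𝒜, ∀ B ∈ 𝒜, A ∪ B ∈ 𝒜)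
    (hconv : ∀ A ∈ 𝒜,
      Filter.Tendsto (fun n : ℕ => ((μs n) A).toReal) Filter.atTop
        (nhds ((μ A).toReal))) :
    ∀ f : X → ℝ, Continuous f → (∃ C : ℝ, ∀ x : X, |f x| ≤ C) →
      Filter.Tendsto (fun n : ℕ => ∫ x, f x ∂(μs n)) Filter.atTop
        (nhds (∫ x, f x ∂μ)) := by
  have hconv' : ∀ A ∈ 𝒜, Tendsto (fun n ↦ μs n A) atTop (𝓝 (μ A)) := fun A hA ↦
    (ENNReal.tendsto_toReal_iff (fun _ ↦ measure_ne_top _ _) (measure_ne_top _ _)).mp (hconv A hA)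
  have h_opens : ∀ G, IsOpen G → μ G ≤ atTop.liminf fun n ↦ μs n G := fun _ hG ↦
    hbasis.measure_isOpen_le_liminf hcount hunion hconv' hG
  rintro f hf ⟨C, hC⟩
  exact BoundedContinuousFunction.tendsto_integral_of_forall_integral_le_liminf_integral
    (fun g hg ↦ integral_le_liminf_integral_of_forall_isOpen_measure_le_liminf_measure hg h_opens)
    (.ofNormedAddCommGroup f hf C fun x ↦ (Real.norm_eq_abs _).trans_le (hC x))

/-- Portmanteau-type criterion for weak convergence.
If the measures of the members of a countable topological basis closed under finite unions
converge, then the measures converge weakly. -/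
theorem stmt_19 {X : Type*} [MetricSpace X] [TopologicalSpace.SeparableSpace X]
    [MeasurableSpace X] [BorelSpace X]
    (μ : MeasureTheory.Measure X) (μs : ℕ → MeasureTheory.Measure X)
    [MeasureTheory.IsProbabilityMeasure μ]
    [∀ n, MeasureTheory.IsProbabilityMeasure (μs n)]
    (𝒜 : Set (Set X)) (hcount : 𝒜.Countable)
    (hbasis : TopologicalSpace.IsTopologicalBasis 𝒜)
    (hunion : ∀ A ∈ 𝒜, ∀ B ∈ 𝒜, A ∪ B ∈ 𝒜)
    (hconv : ∀ A ∈ 𝒜,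
      Filter.Tendsto (fun n : ℕ => ((μs n) A).toReal) Filter.atTop
        (nhds ((μ A).toReal))) :
    ∀ f : X → ℝ, Continuous f → (∃ C : ℝ, ∀ x : X, |f x| ≤ C) →
      Filter.Tendsto (fun n : ℕ => ∫ x, f x ∂(μs n)) Filter.atTop
        (nhds (∫ x, f x ∂μ)) :=
  stmt_19_general μ μs 𝒜 hcount hbasis hunion hconv
end
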